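/- Let K be a field, n ≥ 2, t₁,…,t_n ∈ K with t_j ≠ 0 and t_j ≠ 1 for all j, and let c : K → K be a ring homomorphism with c(t_j) = t_j⁻¹ for all j. Then for every permutation τ of {1,…,n} and every index i with 1 ≤ i ≤ n−1, the matrix γ = U_{n;i}(t_{τ(i+1)})⁻¹ satisfies Ω(τ∘(i,i+1))·γ⁻¹ = γ̄ᵀ·Ω(τ), where (i,i+1) is the transposition of i and i+1. -/

import Mathlib

/-!
With `a = i - 1` and `b = i` (0-indexed), `U_{n;i}(s) = 1 + u vᵀ` is a rank-one perturbation
of the identity, where `u = e_a - e_b` and `v = e_b - s e_a`. Since `1 + vᵀu = -s`,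
Sherman–Morrison gives `γ = U⁻¹ = 1 + s⁻¹ u vᵀ`, and `c s = s⁻¹` turns this into
`γ̄ᵀ = 1 + w uᵀ` with `w = s e_b - e_a`. Writing `Ω = Ω(τ)` and `Ω' = Ω(τ ∘ (a b))`, the
identity becomes `Ω' + (Ω' u) vᵀ = Ω + w (uᵀ Ω)`. As `Ω` is lower triangular with ones below
the diagonal and `a`, `b` are adjacent, `Ω' u` and `uᵀ Ω` are supported on `{a, b}`, and `Ω'`
differs from `Ω` only in its diagonal entries at `a` and `b`; everything reduces to a `2 × 2`
check whose one nontrivial entry is `(1 - s)⁻¹ (1 - s) = 1`.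
-/

open Matrix

/-- `U K n i t` is the `n × n` matrix over `K` (1-indexed rows/columns `1,…,n`) that equals
the identity matrix except that its `2 × 2` block in rows `i, i+1` and columns `i, i+1`
is `((1-t, 1), (t, 0))`.  A row index `r : Fin n` corresponds to the 1-indexed row `r.val + 1`. -/
def GassnerU (K : Type*) [CommRing K] (n : ℕ) (i : ℕ) (t : K) : Matrix (Fin n) (Fin n) K :=
  Matrix.of fun r c =>
    if r.val + 1 = i ∧ c.val + 1 = i then 1 - t
    else if r.val + 1 = i ∧ c.val = i then 1
    else if r.val = i ∧ c.val + 1 = i then t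
    else if r.val = i ∧ c.val = i then 0
    else if r = c then 1 else 0

/-- `Ω(τ)`: the `n × n` matrix with diagonal entries `(1 - t (τ r))⁻¹`, entries below the
diagonal equal to `1`, and entries above the diagonal equal to `0`. -/
def GassnerOmega {K : Type*} [Field K] {n : ℕ} (t : Fin n → K) (τ : Equiv.Perm (Fin n)) :
    Matrix (Fin n) (Fin n) K :=
  Matrix.of fun r c => if r = c then (1 - t (τ r))⁻¹ else if c < r then 1 else 0

namespace Matrix

theorem one_add_vecMulVec_mul_one_add_smul_vecMulVec {ι R : Type*} [Fintype ι] [DecidableEq ι]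
    [CommRing R] (u v : ι → R) {k : R} (hk : 1 + k * (1 + v ⬝ᵥ u) = 0) :
    (1 + vecMulVec u v) * (1 + k • vecMulVec u v) = 1 := by
  have hsq : vecMulVec u v * vecMulVec u v = (v ⬝ᵥ u) • vecMulVec u v := by
    rw [vecMulVec_mul_vecMulVec, vecMulVec_smul]
  calc (1 + vecMulVec u v) * (1 + k • vecMulVec u v)
      = 1 + (1 + k * (1 + v ⬝ᵥ u)) • vecMulVec u v := by
        simp only [add_mul, mul_add, one_mul, mul_one, Matrix.mul_smul, hsq, smul_smul]
        module
    _ = 1 := by rw [hk, zero_smul, add_zero]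

end Matrix

namespace Fin

variable {n : ℕ} {a b r : Fin n}

theorem lt_iff_lt_of_val_eq_succ (hab : b.val = a.val + 1) (hr : r ≠ b) :
    a < r ↔ b < r := by
  rw [Ne, Fin.ext_iff] at hr
  simp only [Fin.lt_def]
  omega

theorem lt_iff_lt_of_val_eq_succ' (hab : b.val = a.val + 1) (hr : r ≠ a) :
    r < a ↔ r < b := by
  rw [Ne, Fin.ext_iff] at hr
  simp only [Fin.lt_def]
  omega

end Fin

section

variable {R K : Type*} [CommRing R] [Field K] {n i : ℕ} {a b : Fin n}

theorem GassnerU_eq_one_add_vecMulVec (ha : a.val + 1 = i) (hb : b.val = i) (s : R) :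
    GassnerU R n i s =
      1 + vecMulVec (Pi.single a 1 - Pi.single b 1) (Pi.single b 1 - s • Pi.single a 1) := by
  ext r l
  simp only [GassnerU, of_apply, Matrix.add_apply, one_apply, vecMulVec_apply, Pi.sub_apply,
    Pi.smul_apply, Pi.single_apply, smul_eq_mul, Fin.ext_iff]
  split_ifs <;> first | omega | ring

theorem GassnerU_mul_one_add_inv_smul_vecMulVec (ha : a.val + 1 = i) (hb : b.val = i) {s : K}
    (hs : s ≠ 0) :
    GassnerU K n i s *
        (1 + s⁻¹ • vecMulVec (Pi.single a 1 - Pi.single b 1) (Pi.single b 1 - s • Pi.single a 1)) =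
      1 := by
  have hab : a ≠ b := by rintro rfl; omega
  rw [GassnerU_eq_one_add_vecMulVec ha hb]
  have hvu : (Pi.single b 1 - s • Pi.single a 1) ⬝ᵥ (Pi.single a 1 - Pi.single b 1) = -s - 1 := by
    simp [dotProduct_sub, hab, hab.symm]
  refine one_add_vecMulVec_mul_one_add_smul_vecMulVec _ _ ?_
  rw [hvu]
  field_simp
  ring

theorem inv_GassnerU (ha : a.val + 1 = i) (hb : b.val = i) {s : K} (hs : s ≠ 0) :
    (GassnerU K n i s)⁻¹ =
      1 + s⁻¹ • vecMulVec (Pi.single a 1 - Pi.single b 1) (Pi.single b 1 - s • Pi.single a 1) :=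
  inv_eq_right_inv (GassnerU_mul_one_add_inv_smul_vecMulVec ha hb hs)

theorem inv_inv_GassnerU (ha : a.val + 1 = i) (hb : b.val = i) {s : K} (hs : s ≠ 0) :
    (GassnerU K n i s)⁻¹⁻¹ = GassnerU K n i s := by
  rw [inv_GassnerU ha hb hs]
  exact inv_eq_left_inv (GassnerU_mul_one_add_inv_smul_vecMulVec ha hb hs)

theorem transpose_map_inv_GassnerU (ha : a.val + 1 = i) (hb : b.val = i) {s : K} (hs : s ≠ 0)
    (c : K →+* K) (hc : c s = s⁻¹) :
    ((GassnerU K n i s)⁻¹.map c)ᵀ =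
      1 + vecMulVec (s • Pi.single b 1 - Pi.single a 1) (Pi.single a 1 - Pi.single b 1) := by
  rw [inv_GassnerU ha hb hs]
  ext r l
  simp only [transpose_apply, map_apply, Matrix.add_apply, one_apply, Matrix.smul_apply,
    vecMulVec_apply, Pi.sub_apply, Pi.single_apply, Pi.smul_apply, smul_eq_mul]
  split_ifs <;> simp_all

theorem GassnerOmega_mulVec_single_sub_single (hab : b.val = a.val + 1) (t : Fin n → K)
    (σ : Equiv.Perm (Fin n)) :
    GassnerOmega t σ *ᵥ (Pi.single a 1 - Pi.single b 1) =
      (1 - t (σ a))⁻¹ • Pi.single a 1 + (1 - (1 - t (σ b))⁻¹) • Pi.single b 1 := by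
  have hlt : a < b := by simp [Fin.lt_def, hab]
  ext r
  obtain rfl | rfl | ⟨hra, hrb⟩ : r = a ∨ r = b ∨ r ≠ a ∧ r ≠ b := by tauto
  · simp [GassnerOmega, mulVec_sub, hlt.ne, hlt.not_gt]
  · simp [GassnerOmega, mulVec_sub, hlt, hlt.ne']
  · simp [GassnerOmega, mulVec_sub, hra, hrb, Fin.lt_iff_lt_of_val_eq_succ hab hrb]

theorem single_sub_single_vecMul_GassnerOmega (hab : b.val = a.val + 1) (t : Fin n → K)
    (σ : Equiv.Perm (Fin n)) :
    (Pi.single a 1 - Pi.single b 1) ᵥ* GassnerOmega t σ =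
      ((1 - t (σ a))⁻¹ - 1) • Pi.single a 1 - (1 - t (σ b))⁻¹ • Pi.single b 1 := by
  have hlt : a < b := by simp [Fin.lt_def, hab]
  ext l
  obtain rfl | rfl | ⟨hla, hlb⟩ : l = a ∨ l = b ∨ l ≠ a ∧ l ≠ b := by tauto
  · simp [GassnerOmega, sub_vecMul, hlt, hlt.ne, hlt.ne']
  · simp [GassnerOmega, sub_vecMul, hlt.ne, hlt.ne', hlt.not_gt]
  · simp [GassnerOmega, sub_vecMul, hla, hlb, Ne.symm hla, Ne.symm hlb,
      Fin.lt_iff_lt_of_val_eq_succ' hab hla]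

theorem GassnerOmega_swap_mul_one_add_vecMulVec (hab : b.val = a.val + 1) (t : Fin n → K)
    (σ : Equiv.Perm (Fin n)) (hs : t (σ b) ≠ 1) :
    GassnerOmega t (σ * Equiv.swap a b) *
        (1 + vecMulVec (Pi.single a 1 - Pi.single b 1) (Pi.single b 1 - t (σ b) • Pi.single a 1)) =
      (1 + vecMulVec (t (σ b) • Pi.single b 1 - Pi.single a 1) (Pi.single a 1 - Pi.single b 1)) *
        GassnerOmega t σ := by
  have hlt : a < b := by simp [Fin.lt_def, hab]
  have hs' : 1 - t (σ b) ≠ 0 := sub_ne_zero.mpr (Ne.symm hs)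
  rw [mul_add, add_mul, mul_one, one_mul, mul_vecMulVec, vecMulVec_mul,
    GassnerOmega_mulVec_single_sub_single hab, single_sub_single_vecMul_GassnerOmega hab]
  ext r l
  have hr : r = a ∨ r = b ∨ r ≠ a ∧ r ≠ b := by tauto
  have hl : l = a ∨ l = b ∨ a ≠ l ∧ b ≠ l := by tauto
  rcases hr with rfl | rfl | ⟨hra, hrb⟩ <;> rcases hl with rfl | rfl | ⟨hla, hlb⟩ <;>
    simp [GassnerOmega, vecMulVec_apply, hlt.ne, hlt.ne', hlt.not_gt,
      Equiv.swap_apply_of_ne_of_ne, *] <;>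
    field_simp <;>
    ring

end

/-- Unitarity property for a negative generator below an arbitrary permutation `τ`:
for `γ = U_{n;i}(t_{τ(i+1)})⁻¹` one has `Ω(τ ∘ (i,i+1)) · γ⁻¹ = γ̄ᵀ · Ω(τ)`, where `γ̄` is the
entrywise application of the ring homomorphism `c` (which satisfies `c (t_j) = t_j⁻¹`). -/
theorem gassner_unitarity_neg_generator_perm {K : Type*} [Field K] (n : ℕ)
    (t : Fin n → K) (ht0 : ∀ j, t j ≠ 0) (ht1 : ∀ j, t j ≠ 1)
    (c : K →+* K) (hc : ∀ j, c (t j) = (t j)⁻¹)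
    (τ : Equiv.Perm (Fin n)) (i : ℕ) (hi1 : 1 ≤ i) (hi2 : i ≤ n - 1) :
    GassnerOmega t (τ * Equiv.swap (⟨i - 1, by omega⟩ : Fin n) ⟨i, by omega⟩) *
        ((GassnerU K n i (t (τ ⟨i, by omega⟩)))⁻¹)⁻¹ =
      (((GassnerU K n i (t (τ ⟨i, by omega⟩)))⁻¹).map c)ᵀ * GassnerOmega t τ := by
  set a : Fin n := ⟨i - 1, by omega⟩
  set b : Fin n := ⟨i, by omega⟩
  have ha : a.val + 1 = i := by simp only [a]; omega
  have hb : b.val = i := rfl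
  rw [inv_inv_GassnerU ha hb (ht0 _), transpose_map_inv_GassnerU ha hb (ht0 _) c (hc _),
    GassnerU_eq_one_add_vecMulVec ha hb]
  exact GassnerOmega_swap_mul_one_add_vecMulVec (by omega) t τ (ht1 _)
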